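/- arXiv:0912.2212 — 2 statements merged into one kernel-verified Lean document; each statement's English description precedes it below -/
import Mathlib

section
/- The submonoid M_1(W) = {f ∈ M(W) : 1·f = 1} of the biHecke monoid is J-trivial; equivalently, the relation f ≤ g defined by w·f ≤_B w·g for all w ∈ W is a partial order on M_1(W) satisfying fg ≤ f and fg ≤ g for all f, g ∈ M_1(W). -/
open scoped Classical

noncomputable section

variable {B W : Type*} [Group W] {M : CoxeterMatrix B}

/-- The elementary bubble antisorting operator `π_i` on a Coxeter group:
`w·π_i = w` if `i` is a right descent of `w`, and `w·π_i = w s_i` otherwise. -/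
noncomputable def piOp (cs : CoxeterSystem M W) (i : B) : W → W :=
  fun w => if cs.IsRightDescent w i then w else w * cs.simple i

/-- The elementary bubble sorting operator `π̄_i` on a Coxeter group:
`w·π̄_i = w s_i` if `i` is a right descent of `w`, and `w·π̄_i = w` otherwise. -/
noncomputable def pibOp (cs : CoxeterSystem M W) (i : B) : W → W :=
  fun w => if cs.IsRightDescent w i then w * cs.simple i else w

/-- The biHecke monoid: the submonoid of `Function.End W` generated by the antisorting
operators `π_i` and the sorting operators `π̄_i`. -/
noncomputable def biHecke (cs : CoxeterSystem M W) : Submonoid (Function.End W) :=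
  Submonoid.closure ({f | ∃ i, f = piOp cs i} ∪ {f | ∃ i, f = pibOp cs i})

/-- Left weak order: `u ≤_L v` iff `ℓ(v u⁻¹) + ℓ(u) = ℓ(v)`. -/
noncomputable def leL (cs : CoxeterSystem M W) (u v : W) : Prop :=
  cs.length (v * u⁻¹) + cs.length u = cs.length v

/-- Right weak order: `u ≤_R v` iff `ℓ(u) + ℓ(u⁻¹ v) = ℓ(v)`. -/
noncomputable def leR (cs : CoxeterSystem M W) (u v : W) : Prop :=
  cs.length u + cs.length (u⁻¹ * v) = cs.length v

/-- Bruhat order: `u ≤_B v` iff some reduced word of `v` has a subword with product `u`. -/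
noncomputable def leB (cs : CoxeterSystem M W) (u v : W) : Prop :=
  ∃ l : List B, cs.IsReduced l ∧ cs.wordProd l = v ∧
    ∃ l' : List B, l'.Sublist l ∧ cs.wordProd l' = u

/-- Right action of a word of operators: apply the operators from left to right. -/
noncomputable def actWord (ops : B → W → W) (l : List B) (w : W) : W :=
  l.foldl (fun x i => ops i x) w

/-- The function `e_w = π_{w⁻¹ w₀} π̄_{w₀ w}` (given reduced words `l1` for `w⁻¹ w₀` and
`l2` for `w₀ w`), acting on the right. -/
noncomputable def eIdem (cs : CoxeterSystem M W) (l1 l2 : List B) : W → W :=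
  fun x => actWord (pibOp cs) l2 (actWord (piOp cs) l1 x)

/-- The parabolic subgroup `W_K`. -/
noncomputable def parab (cs : CoxeterSystem M W) (K : Set B) : Subgroup W :=
  Subgroup.closure (cs.simple '' K)

/-- `K` is a right block of `w` if `w W_K = W_J w` for some `J`. -/
noncomputable def isRightBlock (cs : CoxeterSystem M W) (w : W) (K : Set B) : Prop :=
  ∃ J : Set B, (fun x => w * x) '' (parab cs K : Set W) = (fun x => x * w) '' (parab cs J : Set W)

/-- `J` is a left block of `w` if `w W_K = W_J w` for some `K`. -/
noncomputable def isLeftBlock (cs : CoxeterSystem M W) (w : W) (J : Set B) : Prop :=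
  ∃ K : Set B, (fun x => w * x) '' (parab cs K : Set W) = (fun x => x * w) '' (parab cs J : Set W)

/-- The cutting relation: `v ⊑ w` iff `v = w^K` for some right block `K` of `w`, i.e.
`w = v · u` with `u ∈ W_K` and `v` has no right descents in `K`. -/
noncomputable def cuts (cs : CoxeterSystem M W) (v w : W) : Prop :=
  ∃ K J : Set B,
    ((fun x => w * x) '' (parab cs K : Set W) = (fun x => x * w) '' (parab cs J : Set W)) ∧
    ∃ u ∈ parab cs K, w = v * u ∧ ∀ k ∈ K, ¬ cs.IsRightDescent v k

/-- Covering relation of left weak order. -/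
noncomputable def covL (cs : CoxeterSystem M W) (x y : W) : Prop :=
  leL cs x y ∧ x ≠ y ∧ ∀ z, leL cs x z → leL cs z y → z = x ∨ z = y

end

/-!
Bruhat order has two descriptions: subwords of a reduced word (`leB`), and chains `u < u * t`
with `t` a reflection (`BruhatLE`). They agree by the strong exchange property, which comes from
Tits' representation of `W` on `W × ZMod 2`, where `s i` acts by
`(w, ε) ↦ (s i * w * s i, ε + [w = s i])`: its cocycle `c x t` is the parity of the number of
occurrences of `t` in the right inversion sequence of any word for `x`, and for a reflection `t`
it equals `1` exactly when `t` is a right inversion of `x`.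

By the lifting property, each `π_i` and `π̄_i`, hence every `f ∈ M(W)`, is monotone for Bruhat
order. Moreover `f` maps a pair `u ≤_L v` of the left weak order to a pair `f u ≤_L f v` with
`f v * (f u)⁻¹ ≤_B v * u⁻¹`; for `u = 1` and `f 1 = 1` this says `f w ≤_B w`. Hence `fg ≤ g`,
and `fg ≤ f` by monotonicity of `f`; antisymmetry is that of Bruhat order.
-/

noncomputable section

lemma conj_eq_iff_eq_inv_conj {G : Type*} [Group G] (x w t : G) :
    x * w * x⁻¹ = t ↔ w = x⁻¹ * t * x := by
  constructor <;> rintro rfl <;> group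

lemma zmod_two_eq_zero_of_ne_one {x : ZMod 2} (h : x ≠ 1) : x = 0 := by
  revert x h
  decide

namespace CoxeterSystem

variable {B W : Type*} [Group W] {M : CoxeterMatrix B} (cs : CoxeterSystem M W)

local prefix:100 "s" => cs.simple
local prefix:100 "π" => cs.wordProd
local prefix:100 "ℓ" => cs.length

lemma simple_mul_mul_simple_eq_iff (i : B) (w t : W) :
    s i * w * s i = t ↔ w = s i * t * s i := by
  simpa only [cs.inv_simple] using conj_eq_iff_eq_inv_conj (s i) w t

def reflectionRep (i : B) : Equiv.Perm (W × ZMod 2) :=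
  Function.Involutive.toPerm
    (fun p => (s i * p.1 * s i, p.2 + if p.1 = s i then 1 else 0))
    (by
      rintro ⟨w, ε⟩
      have hconj : s i * w * s i = s i ↔ w = s i := by
        rw [simple_mul_mul_simple_eq_iff, cs.simple_mul_simple_cancel_right]
      ext
      · simp only [← mul_assoc, cs.simple_mul_simple_self, one_mul,
          cs.simple_mul_simple_cancel_right]
      · simp only [hconj, add_assoc, CharTwo.add_self_eq_zero, add_zero])

lemma reflectionRep_apply (i : B) (w : W) (ε : ZMod 2) :
    cs.reflectionRep i (w, ε) = (s i * w * s i, ε + if w = s i then 1 else 0) := rfl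

lemma simple_mul_pow_simple_mul_simple (i j : B) (k : ℕ) :
    s j * (s i * s j) ^ k = ((s i * s j) ^ k)⁻¹ * s j := by
  have h : s j * (s i * s j) * (s j)⁻¹ = (s i * s j)⁻¹ := by
    simp only [cs.inv_simple, mul_inv_rev, ← mul_assoc, cs.simple_mul_simple_cancel_right]
  rw [← inv_pow, ← h, conj_pow, cs.inv_simple, cs.simple_mul_simple_cancel_right]

lemma reflectionRep_mul_pow (i j : B) (k : ℕ) (w : W) (ε : ZMod 2) :
    ((cs.reflectionRep i * cs.reflectionRep j) ^ k) (w, ε) =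
      ((s i * s j) ^ k * w * ((s i * s j) ^ k)⁻¹,
        ε + ∑ n ∈ Finset.range (2 * k), if w = ((s i * s j) ^ n)⁻¹ * s j then 1 else 0) := by
  induction k with
  | zero => simp
  | succ k ih =>
    set p := s i * s j with hp
    have hj : p ^ k * w * (p ^ k)⁻¹ = s j ↔ w = (p ^ (2 * k))⁻¹ * s j := by
      rw [conj_eq_iff_eq_inv_conj, mul_assoc, simple_mul_pow_simple_mul_simple, ← mul_assoc,
        ← mul_inv_rev, ← pow_add, two_mul]
    have hi : s j * (p ^ k * w * (p ^ k)⁻¹) * s j = s i ↔ w = (p ^ (2 * k + 1))⁻¹ * s j := by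
      have hsji : s j * s i * s j = p⁻¹ * s j := by simp [hp, mul_inv_rev, cs.inv_simple]
      rw [simple_mul_mul_simple_eq_iff, conj_eq_iff_eq_inv_conj, hsji, mul_assoc, mul_assoc,
        simple_mul_pow_simple_mul_simple, ← mul_assoc, ← mul_assoc, ← mul_inv_rev, ← mul_inv_rev,
        ← pow_succ', ← pow_add, show k + (k + 1) = 2 * k + 1 by ring]
    rw [pow_succ', Equiv.Perm.mul_apply, ih, Equiv.Perm.mul_apply, reflectionRep_apply,
      reflectionRep_apply]
    ext
    · simp only [pow_succ', mul_inv_rev, hp, cs.inv_simple, mul_assoc]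
    · simp only [hj, hi, show 2 * (k + 1) = 2 * k + 1 + 1 by ring, Finset.sum_range_succ]
      ring

lemma isLiftable_reflectionRep : M.IsLiftable cs.reflectionRep := by
  intro i j
  ext ⟨w, ε⟩ : 1
  set m := M i j
  have hpm : (s i * s j) ^ m = 1 := cs.simple_mul_simple_pow i j
  have hperiodic : ∀ n, ((s i * s j) ^ (m + n))⁻¹ = ((s i * s j) ^ n)⁻¹ := by
    simp [pow_add, hpm]
  rw [reflectionRep_mul_pow, hpm, two_mul, Finset.sum_range_add]
  simp [hperiodic, CharTwo.add_self_eq_zero]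

def reflectionHom : W →* Equiv.Perm (W × ZMod 2) :=
  cs.lift ⟨cs.reflectionRep, cs.isLiftable_reflectionRep⟩

lemma reflectionHom_simple (i : B) : cs.reflectionHom (s i) = cs.reflectionRep i :=
  cs.lift_apply_simple cs.isLiftable_reflectionRep i

def reflectionCocycle (x w : W) : ZMod 2 := (cs.reflectionHom x (w, 0)).2

lemma reflectionHom_apply (x w : W) (ε : ZMod 2) :
    cs.reflectionHom x (w, ε) = (x * w * x⁻¹, ε + cs.reflectionCocycle x w) := by
  induction x using cs.simple_induction_left generalizing w ε with
  | one => simp [reflectionCocycle]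
  | mul_simple_left y i ih =>
    have hcocycle : cs.reflectionCocycle (s i * y) w =
        cs.reflectionCocycle y w + if y * w * y⁻¹ = s i then 1 else 0 := by
      rw [reflectionCocycle, map_mul, Equiv.Perm.mul_apply, ih, reflectionHom_simple,
        reflectionRep_apply, zero_add]
    rw [map_mul, Equiv.Perm.mul_apply, ih, reflectionHom_simple, reflectionRep_apply, hcocycle,
      add_assoc, mul_inv_rev, cs.inv_simple]
    simp only [mul_assoc]

lemma reflectionCocycle_mul (x y w : W) :
    cs.reflectionCocycle (x * y) w =
      cs.reflectionCocycle y w + cs.reflectionCocycle x (y * w * y⁻¹) := by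
  rw [reflectionCocycle, map_mul, Equiv.Perm.mul_apply, reflectionHom_apply,
    reflectionHom_apply, zero_add]

lemma reflectionCocycle_one (w : W) : cs.reflectionCocycle 1 w = 0 := by
  rw [reflectionCocycle, map_one]
  rfl

lemma reflectionCocycle_simple (i : B) (w : W) :
    cs.reflectionCocycle (s i) w = if w = s i then 1 else 0 := by
  rw [reflectionCocycle, reflectionHom_simple, reflectionRep_apply, zero_add]

/- With `t = y * s i * y⁻¹`, the contributions of `y` and `y⁻¹` cancel by the cocycle relation
for `y⁻¹ * y = 1`. -/
lemma reflectionCocycle_self {t : W} (ht : cs.IsReflection t) : cs.reflectionCocycle t t = 1 := by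
  obtain ⟨y, i, rfl⟩ := ht
  have hcancel := cs.reflectionCocycle_mul y⁻¹ y (s i)
  rw [inv_mul_cancel, reflectionCocycle_one] at hcancel
  have hconj : y⁻¹ * (y * s i * y⁻¹) * y⁻¹⁻¹ = s i := by group
  rw [reflectionCocycle_mul, reflectionCocycle_mul, reflectionCocycle_simple, hconj, if_pos rfl,
    cs.inv_simple, cs.simple_mul_simple_cancel_right]
  linear_combination -hcancel

lemma mem_rightInvSeq_of_reflectionCocycle_ne_zero {ω : List B} {t : W}
    (h : cs.reflectionCocycle (π ω) t ≠ 0) : t ∈ cs.rightInvSeq ω := by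
  induction ω with
  | nil => simp [reflectionCocycle_one] at h
  | cons i ω ih =>
    rw [wordProd_cons, reflectionCocycle_mul, reflectionCocycle_simple,
      conj_eq_iff_eq_inv_conj] at h
    rw [rightInvSeq, List.mem_cons]
    by_cases ht : t = (π ω)⁻¹ * s i * π ω
    · exact .inl ht
    · rw [if_neg ht, add_zero] at h
      exact .inr (ih h)

lemma isRightInversion_iff_reflectionCocycle_eq_one {w t : W} (ht : cs.IsReflection t) :
    cs.IsRightInversion w t ↔ cs.reflectionCocycle w t = 1 := by
  have of_cocycle : ∀ w, cs.reflectionCocycle w t = 1 → cs.IsRightInversion w t := by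
    intro w h
    obtain ⟨ω, hω, rfl⟩ := cs.exists_isReduced w
    exact cs.isRightInversion_of_mem_rightInvSeq hω
      (cs.mem_rightInvSeq_of_reflectionCocycle_ne_zero (by simp [h]))
  refine ⟨fun h => ?_, of_cocycle w⟩
  by_contra hne
  have hwt : cs.IsRightInversion (w * t) t := by
    apply of_cocycle
    rw [reflectionCocycle_mul, reflectionCocycle_self cs ht, mul_inv_cancel_right,
      zmod_two_eq_zero_of_ne_one hne, add_zero]
  have := hwt.2
  rw [mul_assoc, ht.mul_self, mul_one] at this
  exact absurd h.2 (by omega)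

/-- The strong exchange property, for arbitrary (not necessarily reduced) words. -/
lemma exists_wordProd_eraseIdx_eq_mul {ω : List B} {t : W}
    (h : cs.IsRightInversion (π ω) t) : ∃ j < ω.length, π (ω.eraseIdx j) = π ω * t := by
  have hmem : t ∈ cs.rightInvSeq ω := cs.mem_rightInvSeq_of_reflectionCocycle_ne_zero
    (by simp [(cs.isRightInversion_iff_reflectionCocycle_eq_one h.1).mp h])
  obtain ⟨j, hj, rfl⟩ := List.mem_iff_getElem.mp hmem
  refine ⟨j, by simpa using hj, ?_⟩
  rw [← cs.wordProd_mul_getD_rightInvSeq, List.getD_eq_getElem]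

variable {cs} in
lemma IsRightInversion.mul_inv_of_not_isRightInversion {u v t : W}
    (hv : cs.IsRightInversion v t) (hu : ¬ cs.IsRightInversion u t) :
    cs.IsRightInversion (v * u⁻¹) (u * t * u⁻¹) := by
  have ht := hv.1
  rw [isRightInversion_iff_reflectionCocycle_eq_one cs ht] at hv hu
  rw [isRightInversion_iff_reflectionCocycle_eq_one cs (ht.conj u)]
  have hcocycle := cs.reflectionCocycle_mul (v * u⁻¹) u t
  rw [inv_mul_cancel_right, hv, zmod_two_eq_zero_of_ne_one hu, zero_add] at hcocycle
  exact hcocycle.symm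

def IsBruhatStep (u v : W) : Prop := ∃ t, cs.IsReflection t ∧ v = u * t ∧ ℓ u < ℓ v

def BruhatLE : W → W → Prop := Relation.ReflTransGen cs.IsBruhatStep

variable {cs}

lemma BruhatLE.refl (u : W) : cs.BruhatLE u u := Relation.ReflTransGen.refl

lemma BruhatLE.trans {u v w : W} (huv : cs.BruhatLE u v) (hvw : cs.BruhatLE v w) :
    cs.BruhatLE u w :=
  Relation.ReflTransGen.trans huv hvw

lemma BruhatLE.length_le {u v : W} (h : cs.BruhatLE u v) : ℓ u ≤ ℓ v := by
  induction h with
  | refl => rfl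
  | tail _ hstep ih =>
    obtain ⟨t, -, -, hlt⟩ := hstep
    omega

lemma BruhatLE.antisymm {u v : W} (huv : cs.BruhatLE u v) (hvu : cs.BruhatLE v u) : u = v := by
  rcases Relation.ReflTransGen.cases_tail huv with rfl | ⟨x, hux, t, -, -, hlt⟩
  · rfl
  have := BruhatLE.length_le hux
  have := hvu.length_le
  omega

variable (cs) in
lemma bruhatLE_mul_reflection {u t : W} (ht : cs.IsReflection t) (hlt : ℓ u < ℓ (u * t)) :
    cs.BruhatLE u (u * t) :=
  Relation.ReflTransGen.single ⟨t, ht, rfl, hlt⟩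

lemma IsRightInversion.bruhatLE {w t : W} (h : cs.IsRightInversion w t) :
    cs.BruhatLE (w * t) w := by
  have hback : w * t * t = w := by rw [mul_assoc, h.1.mul_self, mul_one]
  simpa only [hback] using cs.bruhatLE_mul_reflection h.1 (u := w * t) (by rw [hback]; exact h.2)

lemma mul_simple_bruhatLE {w : W} {i : B} (h : cs.IsRightDescent w i) : cs.BruhatLE (w * s i) w :=
  ((cs.isRightInversion_simple_iff_isRightDescent w i).mpr h).bruhatLE

lemma bruhatLE_mul_simple {w : W} {i : B} (h : ¬ cs.IsRightDescent w i) :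
    cs.BruhatLE w (w * s i) :=
  cs.bruhatLE_mul_reflection (cs.isReflection_simple i)
    (by have := cs.not_isRightDescent_iff.mp h; omega)

variable (cs) in
lemma bruhatLE_simple_mul {w : W} (i : B) (hlt : ℓ w < ℓ (s i * w)) :
    cs.BruhatLE w (s i * w) := by
  have hconj : s i * w = w * (w⁻¹ * s i * w⁻¹⁻¹) := by group
  rw [hconj] at hlt ⊢
  exact cs.bruhatLE_mul_reflection ((cs.isReflection_simple i).conj w⁻¹) hlt

/-- The subword property, for arbitrary (not necessarily reduced) words. -/
lemma BruhatLE.exists_sublist {u v : W} (h : cs.BruhatLE u v) {ω : List B} (hω : π ω = v) :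
    ∃ ω', ω'.Sublist ω ∧ π ω' = u := by
  induction h generalizing ω with
  | refl => exact ⟨ω, .refl ω, hω⟩
  | tail _ hstep ih =>
    obtain ⟨t, ht, rfl, hlt⟩ := hstep
    have hinv : cs.IsRightInversion (π ω) t := by
      refine ⟨ht, ?_⟩
      rwa [hω, mul_assoc, ht.mul_self, mul_one]
    obtain ⟨j, -, hj⟩ := cs.exists_wordProd_eraseIdx_eq_mul hinv
    rw [hω, mul_assoc, ht.mul_self, mul_one] at hj
    obtain ⟨ω', hsub, rfl⟩ := ih hj
    exact ⟨ω', hsub.trans (ω.eraseIdx_sublist j), rfl⟩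

lemma IsBruhatStep.simple_mul_or {x y : W} (h : cs.IsBruhatStep x y) (i : B) :
    cs.BruhatLE (s i * x) y ∨ cs.BruhatLE (s i * x) (s i * y) := by
  obtain ⟨t, ht, rfl, hlt⟩ := h
  rcases Nat.lt_or_gt_of_ne (cs.length_simple_mul_ne x i) with hdown | hup
  · left
    have hx := cs.bruhatLE_simple_mul i (w := s i * x)
      (by rwa [cs.simple_mul_simple_cancel_left])
    rw [cs.simple_mul_simple_cancel_left] at hx
    exact hx.trans (cs.bruhatLE_mul_reflection ht hlt)
  by_cases hup' : ℓ (s i * x) < ℓ (s i * x * t)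
  · right
    rw [← mul_assoc]
    exact cs.bruhatLE_mul_reflection ht hup'
  -- Otherwise `t` is an inversion of `s i * x` but not of `x`, which forces `x * t = s i * x`.
  left
  have hinv : cs.IsRightInversion (s i * x) t :=
    ⟨ht, lt_of_le_of_ne (not_lt.mp hup') (ht.length_mul_left_ne _)⟩
  have hsi := (hinv.mul_inv_of_not_isRightInversion (u := x) fun hx => lt_asymm hlt hx.2).2
  rw [mul_inv_cancel_right, cs.length_simple, Nat.lt_one_iff, cs.length_eq_zero_iff] at hsi
  have hxt : x * t = s i * x := by
    rw [← mul_inv_eq_iff_eq_mul, eq_inv_of_mul_eq_one_right hsi, cs.inv_simple]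
  rw [hxt]
  exact .refl _

lemma BruhatLE.simple_mul_or {a b : W} (h : cs.BruhatLE a b) (i : B) :
    cs.BruhatLE (s i * a) b ∨ cs.BruhatLE (s i * a) (s i * b) := by
  induction h with
  | refl => exact .inr (.refl _)
  | tail _ hstep ih =>
    rcases ih with hx | hx
    · exact .inl (hx.trans (Relation.ReflTransGen.single hstep))
    · exact (hstep.simple_mul_or i).imp hx.trans hx.trans

lemma bruhatLE_wordProd_of_sublist {ω ω' : List B} (hω : cs.IsReduced ω) (h : ω'.Sublist ω) :
    cs.BruhatLE (π ω') (π ω) := by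
  induction ω generalizing ω' with
  | nil => rw [List.sublist_nil.mp h]; exact .refl _
  | cons i ω ih =>
    have hω' : cs.IsReduced ω := by simpa using hω.drop 1
    have hcons : cs.BruhatLE (π ω) (s i * π ω) := by
      refine cs.bruhatLE_simple_mul i ?_
      rw [← wordProd_cons, hω.eq, hω'.eq, List.length_cons]
      omega
    rw [wordProd_cons]
    rcases List.sublist_cons_iff.mp h with h | ⟨r, rfl, hr⟩
    · exact (ih hω' h).trans hcons
    · rw [wordProd_cons]
      exact ((ih hω' hr).simple_mul_or i).elim (·.trans hcons) id

lemma leB_iff_bruhatLE {u v : W} : leB cs u v ↔ cs.BruhatLE u v := by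
  constructor
  · rintro ⟨ω, hω, rfl, ω', hsub, rfl⟩
    exact bruhatLE_wordProd_of_sublist hω hsub
  · intro h
    obtain ⟨ω, hω, rfl⟩ := cs.exists_isReduced v
    obtain ⟨ω', hsub, hω'⟩ := h.exists_sublist rfl
    exact ⟨ω, hω, rfl, ω', hsub, hω'⟩

lemma BruhatLE.mul_simple_of_not_isRightDescent {a b : W} (h : cs.BruhatLE a b) {i : B}
    (hb : ¬ cs.IsRightDescent b i) : cs.BruhatLE (a * s i) (b * s i) := by
  obtain ⟨ω, hω, rfl⟩ := cs.exists_isReduced b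
  obtain ⟨ω', hsub, rfl⟩ := h.exists_sublist rfl
  have hωi : cs.IsReduced (ω ++ [i]) := by
    rw [IsReduced, wordProd_append, wordProd_singleton, cs.not_isRightDescent_iff.mp hb,
      hω.eq, List.length_append, List.length_singleton]
  simpa [wordProd_append] using bruhatLE_wordProd_of_sublist hωi (hsub.append_right [i])

lemma BruhatLE.le_mul_simple_or {a b : W} (h : cs.BruhatLE a b) (i : B) :
    cs.BruhatLE a (b * s i) ∨ cs.BruhatLE (a * s i) (b * s i) := by
  obtain ⟨ω, hω, hωb⟩ := cs.exists_isReduced (b * s i)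
  obtain ⟨ω', hsub, rfl⟩ := h.exists_sublist (ω := ω ++ [i])
    (by rw [wordProd_append, ← hωb, wordProd_singleton, cs.simple_mul_simple_cancel_right])
  obtain ⟨ω₁, ω₂, rfl, h₁, h₂⟩ := List.sublist_append_iff.mp hsub
  rw [hωb]
  rcases List.sublist_singleton.mp h₂ with rfl | rfl
  · left
    simpa using bruhatLE_wordProd_of_sublist hω h₁
  · right
    simpa [wordProd_append, cs.simple_mul_simple_cancel_right] using
      bruhatLE_wordProd_of_sublist hω h₁

lemma piOp_of_isRightDescent {w : W} {i : B} (h : cs.IsRightDescent w i) : piOp cs i w = w :=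
  if_pos h

lemma piOp_of_not_isRightDescent {w : W} {i : B} (h : ¬ cs.IsRightDescent w i) :
    piOp cs i w = w * s i :=
  if_neg h

lemma pibOp_of_isRightDescent {w : W} {i : B} (h : cs.IsRightDescent w i) :
    pibOp cs i w = w * s i :=
  if_pos h

lemma pibOp_of_not_isRightDescent {w : W} {i : B} (h : ¬ cs.IsRightDescent w i) :
    pibOp cs i w = w :=
  if_neg h

lemma bruhatLE_piOp (w : W) (i : B) : cs.BruhatLE w (piOp cs i w) := by
  unfold piOp
  split_ifs with hw
  · exact .refl w
  · exact bruhatLE_mul_simple hw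

lemma mul_simple_bruhatLE_piOp (w : W) (i : B) : cs.BruhatLE (w * s i) (piOp cs i w) := by
  unfold piOp
  split_ifs with hw
  · exact mul_simple_bruhatLE hw
  · exact .refl _

lemma pibOp_bruhatLE (w : W) (i : B) : cs.BruhatLE (pibOp cs i w) w := by
  unfold pibOp
  split_ifs with hw
  · exact mul_simple_bruhatLE hw
  · exact .refl w

lemma pibOp_bruhatLE_mul_simple (w : W) (i : B) : cs.BruhatLE (pibOp cs i w) (w * s i) := by
  unfold pibOp
  split_ifs with hw
  · exact .refl _
  · exact bruhatLE_mul_simple hw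

lemma BruhatLE.mul_simple_piOp {a b : W} (h : cs.BruhatLE a b) (i : B) :
    cs.BruhatLE (a * s i) (piOp cs i b) := by
  by_cases hb : cs.IsRightDescent b i
  · rw [piOp_of_isRightDescent hb]
    rcases h.le_mul_simple_or i with h' | h'
    · simpa [cs.simple_mul_simple_cancel_right] using h'.mul_simple_of_not_isRightDescent
        (cs.isRightDescent_iff_not_isRightDescent_mul.mp hb)
    · exact h'.trans (mul_simple_bruhatLE hb)
  · rw [piOp_of_not_isRightDescent hb]
    exact h.mul_simple_of_not_isRightDescent hb

lemma BruhatLE.apply_piOp {a b : W} (h : cs.BruhatLE a b) (i : B) :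
    cs.BruhatLE (piOp cs i a) (piOp cs i b) := by
  by_cases ha : cs.IsRightDescent a i
  · rw [piOp_of_isRightDescent ha]
    exact h.trans (bruhatLE_piOp b i)
  · rw [piOp_of_not_isRightDescent ha]
    exact h.mul_simple_piOp i

lemma BruhatLE.apply_pibOp {a b : W} (h : cs.BruhatLE a b) (i : B) :
    cs.BruhatLE (pibOp cs i a) (pibOp cs i b) := by
  by_cases hb : cs.IsRightDescent b i
  · rw [pibOp_of_isRightDescent hb]
    rcases h.le_mul_simple_or i with h' | h'
    · exact (pibOp_bruhatLE a i).trans h'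
    · exact (pibOp_bruhatLE_mul_simple a i).trans h'
  · rw [pibOp_of_not_isRightDescent hb]
    exact (pibOp_bruhatLE a i).trans h

lemma mul_simple_mul_inv_mul_simple (u v : W) (i : B) : v * s i * (u * s i)⁻¹ = v * u⁻¹ := by
  rw [mul_inv_rev, cs.inv_simple, mul_assoc, cs.simple_mul_simple_cancel_left]

variable (cs) in
lemma leL_one_left (w : W) : leL cs 1 w := by
  simp [leL]

lemma IsRightDescent.of_leL {u v : W} (h : leL cs u v) {i : B} (hu : cs.IsRightDescent u i) :
    cs.IsRightDescent v i := by
  have hle := cs.length_mul_le (v * u⁻¹) (u * s i)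
  rw [show v * u⁻¹ * (u * s i) = v * s i by group] at hle
  rw [isRightDescent_iff] at hu
  unfold IsRightDescent
  unfold leL at h
  omega

lemma leL_mul_simple {u v : W} (h : leL cs u v) {i : B}
    (hiff : cs.IsRightDescent u i ↔ cs.IsRightDescent v i) : leL cs (u * s i) (v * s i) := by
  unfold leL at h ⊢
  rw [mul_simple_mul_inv_mul_simple]
  by_cases hu : cs.IsRightDescent u i
  · have hu' := cs.isRightDescent_iff.mp hu
    have hv' := cs.isRightDescent_iff.mp (hiff.mp hu)
    omega
  · have hu' := cs.not_isRightDescent_iff.mp hu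
    have hv' := cs.not_isRightDescent_iff.mp (hiff.not.mp hu)
    omega

lemma length_mul_simple_mul_inv_add_one_and_bruhatLE {u v : W} (h : leL cs u v) {i : B}
    (hv : cs.IsRightDescent v i) (hu : ¬ cs.IsRightDescent u i) :
    ℓ (v * s i * u⁻¹) + 1 = ℓ (v * u⁻¹) ∧ cs.BruhatLE (v * s i * u⁻¹) (v * u⁻¹) := by
  have hinv := IsRightInversion.mul_inv_of_not_isRightInversion
    ((cs.isRightInversion_simple_iff_isRightDescent v i).mpr hv)
    (mt (cs.isRightInversion_simple_iff_isRightDescent u i).mp hu)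
  have hprod : v * u⁻¹ * (u * s i * u⁻¹) = v * s i * u⁻¹ := by group
  have hlt := hinv.2
  have hlower := cs.length_le_length_mul_add_right (v * s i) u⁻¹
  rw [hprod] at hlt
  rw [cs.length_inv] at hlower
  have := cs.isRightDescent_iff.mp hv
  unfold leL at h
  exact ⟨by omega, hprod ▸ hinv.bruhatLE⟩

variable (cs) in
def IsLeftWeakContraction (f : W → W) : Prop :=
  ∀ u v, leL cs u v → leL cs (f u) (f v) ∧ cs.BruhatLE (f v * (f u)⁻¹) (v * u⁻¹)

lemma IsLeftWeakContraction.comp {f g : W → W} (hf : cs.IsLeftWeakContraction f)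
    (hg : cs.IsLeftWeakContraction g) : cs.IsLeftWeakContraction (f ∘ g) := by
  intro u v h
  obtain ⟨hg₁, hg₂⟩ := hg u v h
  obtain ⟨hf₁, hf₂⟩ := hf _ _ hg₁
  exact ⟨hf₁, hf₂.trans hg₂⟩

variable (cs) in
lemma isLeftWeakContraction_piOp (i : B) : cs.IsLeftWeakContraction (piOp cs i) := by
  intro u v h
  by_cases hu : cs.IsRightDescent u i
  · rw [piOp_of_isRightDescent hu, piOp_of_isRightDescent (hu.of_leL h)]
    exact ⟨h, .refl _⟩
  by_cases hv : cs.IsRightDescent v i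
  · have hvu : v * (u * s i)⁻¹ = v * s i * u⁻¹ := by
      rw [mul_inv_rev, cs.inv_simple, mul_assoc]
    obtain ⟨hlen, hle⟩ := length_mul_simple_mul_inv_add_one_and_bruhatLE h hv hu
    rw [piOp_of_not_isRightDescent hu, piOp_of_isRightDescent hv, hvu]
    refine ⟨?_, hle⟩
    have := cs.not_isRightDescent_iff.mp hu
    unfold leL at h ⊢
    rw [hvu]
    omega
  · rw [piOp_of_not_isRightDescent hu, piOp_of_not_isRightDescent hv,
      mul_simple_mul_inv_mul_simple]
    exact ⟨leL_mul_simple h (iff_of_false hu hv), .refl _⟩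

variable (cs) in
lemma isLeftWeakContraction_pibOp (i : B) : cs.IsLeftWeakContraction (pibOp cs i) := by
  intro u v h
  by_cases hu : cs.IsRightDescent u i
  · have hv := hu.of_leL h
    rw [pibOp_of_isRightDescent hu, pibOp_of_isRightDescent hv, mul_simple_mul_inv_mul_simple]
    exact ⟨leL_mul_simple h (iff_of_true hu hv), .refl _⟩
  by_cases hv : cs.IsRightDescent v i
  · obtain ⟨hlen, hle⟩ := length_mul_simple_mul_inv_add_one_and_bruhatLE h hv hu
    rw [pibOp_of_not_isRightDescent hu, pibOp_of_isRightDescent hv]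
    refine ⟨?_, hle⟩
    have := cs.isRightDescent_iff.mp hv
    unfold leL at h ⊢
    omega
  · rw [pibOp_of_not_isRightDescent hu, pibOp_of_not_isRightDescent hv]
    exact ⟨h, .refl _⟩

lemma isLeftWeakContraction_of_mem_biHecke {f : Function.End W} (hf : f ∈ biHecke cs) :
    cs.IsLeftWeakContraction f := by
  induction hf using Submonoid.closure_induction with
  | mem f hf =>
    rcases hf with ⟨i, rfl⟩ | ⟨i, rfl⟩
    exacts [cs.isLeftWeakContraction_piOp i, cs.isLeftWeakContraction_pibOp i]
  | one => exact fun u v h => ⟨h, .refl _⟩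
  | mul f g _ _ hf hg => exact hf.comp hg

lemma BruhatLE.apply_of_mem_biHecke {a b : W} (h : cs.BruhatLE a b) {f : Function.End W}
    (hf : f ∈ biHecke cs) : cs.BruhatLE (f a) (f b) := by
  induction hf using Submonoid.closure_induction generalizing a b with
  | mem f hf =>
    rcases hf with ⟨i, rfl⟩ | ⟨i, rfl⟩
    exacts [h.apply_piOp i, h.apply_pibOp i]
  | one => exact h
  | mul f g _ _ hf hg => exact hf (hg h)

lemma apply_bruhatLE_self_of_mem_biHecke {f : Function.End W} (hf : f ∈ biHecke cs)
    (h1 : f 1 = 1) (w : W) : cs.BruhatLE (f w) w := by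
  simpa [h1] using (isLeftWeakContraction_of_mem_biHecke hf 1 w (leL_one_left cs w)).2

end CoxeterSystem

end

theorem borel_Jtrivial_general {B W : Type*} [Group W] {M : CoxeterMatrix B}
    (cs : CoxeterSystem M W) :
    (∀ f : Function.End W, f ∈ biHecke cs → f 1 = 1 → ∀ w, leB cs (f w) (f w)) ∧
    (∀ f g h : Function.End W, f ∈ biHecke cs → f 1 = 1 → g ∈ biHecke cs → g 1 = 1 →
      h ∈ biHecke cs → h 1 = 1 →
      (∀ w, leB cs (f w) (g w)) → (∀ w, leB cs (g w) (h w)) → ∀ w, leB cs (f w) (h w)) ∧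
    (∀ f g : Function.End W, f ∈ biHecke cs → f 1 = 1 → g ∈ biHecke cs → g 1 = 1 →
      (∀ w, leB cs (f w) (g w)) → (∀ w, leB cs (g w) (f w)) → f = g) ∧
    (∀ f g : Function.End W, f ∈ biHecke cs → f 1 = 1 → g ∈ biHecke cs → g 1 = 1 →
      (∀ w, leB cs ((f * g : Function.End W) w) (f w)) ∧
      (∀ w, leB cs ((f * g : Function.End W) w) (g w))) := by
  simp only [CoxeterSystem.leB_iff_bruhatLE]
  refine ⟨fun f _ _ w => .refl (f w), ?_, ?_, ?_⟩
  · intro f g h _ _ _ _ _ _ hfg hgh w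
    exact (hfg w).trans (hgh w)
  · intro f g _ _ _ _ hfg hgf
    exact funext fun w => (hfg w).antisymm (hgf w)
  · intro f g hf hf1 hg hg1
    have hgw := CoxeterSystem.apply_bruhatLE_self_of_mem_biHecke hg hg1
    exact ⟨fun w => (hgw w).apply_of_mem_biHecke hf,
      fun w => CoxeterSystem.apply_bruhatLE_self_of_mem_biHecke hf hf1 (g w)⟩

/-- The Borel submonoid `M_1(W) = {f ∈ M(W) : 1·f = 1}` is `J`-trivial: the relation
`f ≤ g ⟺ ∀ w, w·f ≤_B w·g` is a partial order on `M_1(W)` satisfying `fg ≤ f` and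
`fg ≤ g`. -/
theorem borel_Jtrivial {B W : Type*} [Group W] [Finite W] {M : CoxeterMatrix B}
    (cs : CoxeterSystem M W) :
    (∀ f : Function.End W, f ∈ biHecke cs → f 1 = 1 → ∀ w, leB cs (f w) (f w)) ∧
    (∀ f g h : Function.End W, f ∈ biHecke cs → f 1 = 1 → g ∈ biHecke cs → g 1 = 1 →
      h ∈ biHecke cs → h 1 = 1 →
      (∀ w, leB cs (f w) (g w)) → (∀ w, leB cs (g w) (h w)) → ∀ w, leB cs (f w) (h w)) ∧
    (∀ f g : Function.End W, f ∈ biHecke cs → f 1 = 1 → g ∈ biHecke cs → g 1 = 1 →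
      (∀ w, leB cs (f w) (g w)) → (∀ w, leB cs (g w) (f w)) → f = g) ∧
    (∀ f g : Function.End W, f ∈ biHecke cs → f 1 = 1 → g ∈ biHecke cs → g 1 = 1 →
      (∀ w, leB cs ((f * g : Function.End W) w) (f w)) ∧
      (∀ w, leB cs ((f * g : Function.End W) w) (g w))) :=
  borel_Jtrivial_general cs
end

section
/- The cutting relation on a finite Coxeter group is a partial order refining both weak orders: the relation v ⊑ w, defined by v = w^K for some right block K of w, is reflexive, antisymmetric and transitive, and v ⊑ w implies v ≤_L w and v ≤_R w. -/
open scoped Classical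

/-!
Everything rests on one length identity: if `v` has no right descent in `K`, then
`ℓ (v * x) = ℓ v + ℓ x` for all `x ∈ W_K`. It comes from the exchange property, which in turn
comes from the sign action of `W` on `W × ℤ/2` (Björner–Brenti, Thm. 1.4.3): the parity of the
number of occurrences of `t` in the left inversion sequence of a word depends only on the product
of the word. For `m` of minimal length in `W_K m`, exchange applied to reduced words of `x` and `m`
gives `ℓ (x * m) = ℓ x + ℓ m`, and an element without left descents in `K` is such an `m`.

If `w = v * u` with `u ∈ W_K` and `v W_K = W_J v`, the identity gives `ℓ w = ℓ v + ℓ u`, i.e.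
`v ≤_R w`; and `v` has no left descents in `J`, so the mirrored identity applied to
`v u v⁻¹ ∈ W_J` gives `v ≤_L w`. Antisymmetry follows from `≤_R`. For transitivity, blocks
`K₁` of `v` and `K₂` of `w` combine into the block `K₁ ∪ K₂` of `w`, and `u ≤_L v` ensures that
`u` inherits from `v` the absence of right descents in `K₂`.
-/

open Pointwise

theorem image_mul_left_eq_image_mul_right_iff {G : Type*} [Group G] (w : G) (H H' : Subgroup G) :
    (fun x => w * x) '' (H : Set G) = (fun x => x * w) '' (H' : Set G) ↔ MulAut.conj w • H = H' := by
  rw [Set.image_mul_left, Set.image_mul_right, Set.ext_iff, SetLike.ext_iff]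
  simp only [Set.mem_preimage, SetLike.mem_coe, Subgroup.mem_pointwise_smul_iff_inv_smul_mem,
    ← map_inv, MulAut.smul_def, MulAut.conj_apply, inv_inv]
  constructor
  · intro h y
    simpa [mul_assoc] using h (y * w)
  · intro h z
    simpa [mul_assoc] using h (z * w⁻¹)

theorem Subgroup.conj_mul_smul_eq_of_mem {G : Type*} [Group G] {H : Subgroup G} (v : G) {u : G}
    (hu : u ∈ H) : MulAut.conj (v * u) • H = MulAut.conj v • H := by
  rw [map_mul, mul_smul, Subgroup.conj_smul_eq_self_of_mem hu]

namespace CoxeterSystem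

open List

variable {B W : Type*} [Group W] {M : CoxeterMatrix B} (cs : CoxeterSystem M W)

local prefix:100 "s" => cs.simple
local prefix:100 "π" => cs.wordProd
local prefix:100 "ℓ" => cs.length
local prefix:100 "lis" => cs.leftInvSeq

noncomputable def reflSign (i : B) (p : W × ZMod 2) : W × ZMod 2 :=
  (s i * p.1 * s i, p.2 + if p.1 = s i then 1 else 0)

theorem simple_conj_eq_simple_iff {i : B} {x : W} : s i * x * s i = s i ↔ x = s i := by
  constructor <;> intro h
  · simpa [mul_assoc] using congrArg (fun y => s i * y * s i) h
  · simp [h]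

theorem reflSign_involutive (i : B) : Function.Involutive (cs.reflSign i) := by
  rintro ⟨x, e⟩
  simp only [reflSign, simple_conj_eq_simple_iff, Prod.mk.injEq]
  exact ⟨by simp [mul_assoc], by rw [add_assoc, CharTwo.add_self_eq_zero, add_zero]⟩

noncomputable def reflSignPerm (i : B) : Equiv.Perm (W × ZMod 2) :=
  (cs.reflSign_involutive i).toPerm

theorem prod_map_reflSignPerm_apply (ω : List B) (x : W) (e : ZMod 2) :
    (ω.map cs.reflSignPerm).prod (x, e) =
      (π ω * x * (π ω)⁻¹, e + (lis ω).count (π ω * x * (π ω)⁻¹)) := by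
  induction ω with
  | nil => simp
  | cons i ω ih =>
    rw [map_cons, prod_cons, Equiv.Perm.mul_apply, ih]
    set y := π ω * x * (π ω)⁻¹
    have hy : π (i :: ω) * x * (π (i :: ω))⁻¹ = MulAut.conj (s i) y := by
      simp only [y, wordProd_cons, mul_inv_rev, inv_simple, MulAut.conj_apply, mul_assoc]
    have hcount : (lis (i :: ω)).count (MulAut.conj (s i) y) =
        (lis ω).count y + if y = s i then 1 else 0 := by
      rw [leftInvSeq, count_cons, count_map_of_injective _ _ (MulAut.conj (s i)).injective]
      simp only [MulAut.conj_apply, beq_iff_eq, inv_simple, @eq_comm _ (s i),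
        simple_conj_eq_simple_iff]
    rw [hy, hcount]
    simp [reflSignPerm, reflSign, MulAut.conj_apply, add_assoc]

theorem alternatingWord_two_mul_succ (i i' : B) (m : ℕ) :
    alternatingWord i i' (2 * (m + 1)) = i :: i' :: alternatingWord i i' (2 * m) := by
  rw [show 2 * (m + 1) = 2 * m + 1 + 1 by ring, alternatingWord_succ', alternatingWord_succ',
    if_neg (by simp [parity_simps]), if_pos (by simp [parity_simps])]

theorem wordProd_alternatingWord_add_two_mul (i i' : B) (n : ℕ) :
    π (alternatingWord i i' (n + 2 * M i i')) = π (alternatingWord i i' n) := by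
  rw [prod_alternatingWord_eq_mul_pow, prod_alternatingWord_eq_mul_pow,
    show (n + 2 * M i i') / 2 = n / 2 + M i i' by omega, pow_add, simple_mul_simple_pow, mul_one]
  simp [parity_simps]

theorem leftInvSeq_alternatingWord (i i' : B) (p : ℕ) :
    lis (alternatingWord i i' (2 * p)) =
      (range (2 * p)).map fun k => π (alternatingWord i' i (2 * k + 1)) :=
  ext_getElem (by simp) fun k hk _ => by
    rw [getElem_map, getElem_range, getElem_leftInvSeq_alternatingWord cs i i' p k (by simpa using hk)]

theorem even_count_leftInvSeq_alternatingWord (i i' : B) (x : W) :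
    Even ((lis (alternatingWord i i' (2 * M i i'))).count x) := by
  have hperiod : ∀ k, π (alternatingWord i' i (2 * (M i i' + k) + 1)) =
      π (alternatingWord i' i (2 * k + 1)) := fun k => by
    rw [show 2 * (M i i' + k) + 1 = 2 * k + 1 + 2 * M i' i by rw [M.symmetric]; ring,
      wordProd_alternatingWord_add_two_mul]
  rw [leftInvSeq_alternatingWord, two_mul, range_add, map_append, map_map]
  simp only [Function.comp_def, hperiod, count_append]
  exact ⟨_, rfl⟩

theorem isLiftable_reflSignPerm : M.IsLiftable cs.reflSignPerm := by
  intro i i'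
  have hprod : ∀ m, ((alternatingWord i i' (2 * m)).map cs.reflSignPerm).prod =
      (cs.reflSignPerm i * cs.reflSignPerm i') ^ m := fun m => by
    induction m with
    | zero => simp [alternatingWord]
    | succ m ih => rw [alternatingWord_two_mul_succ, map_cons, map_cons, prod_cons, prod_cons, ih,
        pow_succ', mul_assoc]
  have hone : π (alternatingWord i i' (2 * M i i')) = 1 := by
    simpa [alternatingWord] using cs.wordProd_alternatingWord_add_two_mul i i' 0
  ext ⟨x, e⟩ : 1
  rw [← hprod, prod_map_reflSignPerm_apply, hone]
  obtain ⟨c, hc⟩ := cs.even_count_leftInvSeq_alternatingWord i i' x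
  simp [hc, CharTwo.add_self_eq_zero]

noncomputable def reflSignHom : W →* Equiv.Perm (W × ZMod 2) :=
  cs.lift ⟨cs.reflSignPerm, cs.isLiftable_reflSignPerm⟩

theorem reflSignHom_wordProd (ω : List B) :
    cs.reflSignHom (π ω) = (ω.map cs.reflSignPerm).prod := by
  induction ω with
  | nil => simp
  | cons i ω ih => rw [wordProd_cons, map_mul, ih, map_cons, prod_cons, reflSignHom, lift_apply_simple]

theorem natCast_count_leftInvSeq_eq {ω ω' : List B} (h : π ω = π ω') (t : W) :
    ((lis ω).count t : ZMod 2) = (lis ω').count t := by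
  have := congrArg (fun f : Equiv.Perm _ => (f ((π ω)⁻¹ * t * π ω, 0)).2)
    (congrArg cs.reflSignHom h)
  rw [reflSignHom_wordProd, reflSignHom_wordProd] at this
  simpa [prod_map_reflSignPerm_apply, ← h, mul_assoc] using this

/- `i :: ω'` is a reduced word for `π ω`, so `s i` occurs exactly once in its left inversion
sequence; by parity it occurs in that of `ω`. -/
theorem simple_mem_leftInvSeq {ω : List B} {i : B}
    (hi : cs.IsLeftDescent (π ω) i) : s i ∈ lis ω := by
  obtain ⟨ω', hω', hsω⟩ := cs.exists_isReduced (s i * π ω)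
  have hprod : π (i :: ω') = π ω := by rw [wordProd_cons, ← hsω, simple_mul_simple_cancel_left]
  have hred : cs.IsReduced (i :: ω') := by
    have := (cs.isLeftDescent_iff).mp hi
    rw [IsReduced, hprod, length_cons, ← hω'.eq, ← hsω]
    omega
  have hone : (lis (i :: ω')).count (s i) = 1 :=
    count_eq_one_of_mem hred.nodup_leftInvSeq (by simp [leftInvSeq])
  by_contra hnot
  have := cs.natCast_count_leftInvSeq_eq hprod (s i)
  rw [hone, count_eq_zero_of_not_mem hnot] at this
  exact one_ne_zero (by exact_mod_cast this)

theorem exists_eraseIdx_of_isLeftDescent {ω : List B} {i : B}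
    (hi : cs.IsLeftDescent (π ω) i) : ∃ j < ω.length, s i * π ω = π (ω.eraseIdx j) := by
  obtain ⟨j, hj, hget⟩ := mem_iff_getElem.mp (cs.simple_mem_leftInvSeq hi)
  refine ⟨j, by simpa using hj, ?_⟩
  rw [← getD_leftInvSeq_mul_wordProd, getD_eq_getElem _ _ hj, hget]

theorem exists_isReduced_sublist (ω : List B) : ∃ ρ, ρ <+ ω ∧ cs.IsReduced ρ ∧ π ρ = π ω := by
  induction ω with
  | nil => exact ⟨[], Sublist.slnil, by simp [IsReduced], rfl⟩
  | cons i ω ih =>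
    obtain ⟨ρ, hsub, hred, hprod⟩ := ih
    by_cases hi : cs.IsLeftDescent (π ρ) i
    · obtain ⟨j, hj, hρ⟩ := cs.exists_eraseIdx_of_isLeftDescent hi
      refine ⟨ρ.eraseIdx j, ((eraseIdx_sublist ρ j).trans hsub).cons i, ?_, ?_⟩
      · have := (cs.isLeftDescent_iff).mp hi
        rw [IsReduced, ← hρ, length_eraseIdx_of_lt hj, ← hred.eq]
        omega
      · rw [← hρ, hprod, wordProd_cons]
    · refine ⟨i :: ρ, hsub.cons_cons i, ?_, by rw [wordProd_cons, wordProd_cons, hprod]⟩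
      rw [IsReduced, wordProd_cons, (cs.not_isLeftDescent_iff).mp hi, hred.eq, length_cons]

theorem simple_mem_parab {K : Set B} {k : B} (hk : k ∈ K) : s k ∈ parab cs K :=
  Subgroup.subset_closure ⟨k, hk, rfl⟩

theorem wordProd_mem_parab {K : Set B} {ω : List B} (hω : ∀ i ∈ ω, i ∈ K) :
    π ω ∈ parab cs K :=
  (parab cs K).list_prod_mem (by simpa using fun i hi => cs.simple_mem_parab (hω i hi))

theorem exists_word_of_mem_parab {K : Set B} {x : W} (hx : x ∈ parab cs K) :
    ∃ ω : List B, (∀ i ∈ ω, i ∈ K) ∧ π ω = x := by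
  induction hx using Subgroup.closure_induction with
  | mem y hy =>
    obtain ⟨i, hi, rfl⟩ := hy
    exact ⟨[i], by simpa using hi, by simp⟩
  | one => exact ⟨[], by simp, rfl⟩
  | mul y z _ _ ihy ihz =>
    obtain ⟨ω, hω, rfl⟩ := ihy
    obtain ⟨ω', hω', rfl⟩ := ihz
    exact ⟨ω ++ ω', by simpa using fun i hi => (hi.elim (hω i) (hω' i)), wordProd_append ..⟩
  | inv y _ ih =>
    obtain ⟨ω, hω, rfl⟩ := ih
    exact ⟨ω.reverse, by simpa using hω, by simp⟩

theorem exists_isReduced_of_mem_parab {K : Set B} {x : W} (hx : x ∈ parab cs K) :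
    ∃ ω : List B, (∀ i ∈ ω, i ∈ K) ∧ cs.IsReduced ω ∧ π ω = x := by
  obtain ⟨ω, hωK, rfl⟩ := cs.exists_word_of_mem_parab hx
  obtain ⟨ρ, hsub, hred, hprod⟩ := cs.exists_isReduced_sublist ω
  exact ⟨ρ, fun i hi => hωK i (hsub.subset hi), hred, hprod⟩

theorem exists_isLeftDescent_of_mem_parab {K : Set B} {x : W} (hx : x ∈ parab cs K)
    (hx1 : x ≠ 1) : ∃ k ∈ K, cs.IsLeftDescent x k := by
  obtain ⟨_ | ⟨k, ω⟩, hωK, hred, rfl⟩ := cs.exists_isReduced_of_mem_parab hx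
  · exact absurd rfl hx1
  · refine ⟨k, hωK k mem_cons_self, ?_⟩
    have := cs.length_wordProd_le ω
    have hlen := hred.eq
    rw [wordProd_cons] at hlen ⊢
    rw [IsLeftDescent, simple_mul_simple_cancel_left, hlen, length_cons]
    omega

/- Exchange deletes a letter of `ω ++ ρ`: a letter of `ω` would shorten the reduced word `k :: ω`,
a letter of `ρ` would produce a shorter element of `W_K m`. -/
theorem not_isLeftDescent_wordProd_mul_of_forall_length_le {K : Set B} {m : W}
    (hm : ∀ y ∈ parab cs K, ℓ m ≤ ℓ (y * m)) {k : B} {ω : List B} (hωK : ∀ i ∈ k :: ω, i ∈ K)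
    (hred : cs.IsReduced (k :: ω)) : ¬ cs.IsLeftDescent (π ω * m) k := by
  intro hk
  obtain ⟨ρ, hρ, rfl⟩ := cs.exists_isReduced m
  rw [← wordProd_append] at hk
  obtain ⟨j, hj, hdel⟩ := cs.exists_eraseIdx_of_isLeftDescent hk
  rw [length_append] at hj
  rcases lt_or_ge j ω.length with hjω | hjω
  · rw [eraseIdx_append_of_lt_length hjω, wordProd_append, wordProd_append, ← mul_assoc,
      mul_left_inj, ← wordProd_cons] at hdel
    have := cs.length_wordProd_le (ω.eraseIdx j)
    rw [length_eraseIdx_of_lt hjω, ← hdel, hred.eq, length_cons] at this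
    omega
  · rw [eraseIdx_append_of_length_le hjω, wordProd_append, wordProd_append] at hdel
    have hωK' : π ω ∈ parab cs K := cs.wordProd_mem_parab fun i hi => hωK i (mem_cons_of_mem k hi)
    have hy : (π ω)⁻¹ * s k * π ω ∈ parab cs K :=
      mul_mem (mul_mem (inv_mem hωK') (cs.simple_mem_parab (hωK k mem_cons_self))) hωK'
    have hshort : (π ω)⁻¹ * s k * π ω * π ρ = π (ρ.eraseIdx (j - ω.length)) := by
      simp only [mul_assoc, hdel, inv_mul_cancel_left]
    have hle := hm _ hy
    have := cs.length_wordProd_le (ρ.eraseIdx (j - ω.length))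
    rw [length_eraseIdx_of_lt (by omega)] at this
    rw [hshort, hρ.eq] at hle
    omega

theorem length_mul_eq_of_forall_length_le {K : Set B} {m : W}
    (hm : ∀ y ∈ parab cs K, ℓ m ≤ ℓ (y * m)) {x : W} (hx : x ∈ parab cs K) :
    ℓ (x * m) = ℓ x + ℓ m := by
  obtain ⟨ω, hωK, hred, rfl⟩ := cs.exists_isReduced_of_mem_parab hx
  rw [hred.eq]
  clear hx
  induction ω with
  | nil => simp
  | cons k ω ih =>
    have hk := cs.not_isLeftDescent_wordProd_mul_of_forall_length_le hm hωK hred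
    rw [wordProd_cons, mul_assoc, (cs.not_isLeftDescent_iff).mp hk,
      ih (fun i hi => hωK i (mem_cons_of_mem k hi)) (by simpa using hred.drop 1), length_cons]
    omega

theorem length_mul_eq_of_not_isLeftDescent {J : Set B} {v : W}
    (hv : ∀ j ∈ J, ¬ cs.IsLeftDescent v j) {x : W} (hx : x ∈ parab cs J) :
    ℓ (x * v) = ℓ x + ℓ v := by
  obtain ⟨y, hy, hmin⟩ :=
    (InvImage.wf (fun y => ℓ (y * v)) wellFounded_lt).has_min (parab cs J : Set W) ⟨1, one_mem _⟩
  have hm : ∀ z ∈ parab cs J, ℓ (y * v) ≤ ℓ (z * (y * v)) := fun z hz => by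
    simpa [mul_assoc] using not_lt.mp (hmin (z * y) (mul_mem hz hy))
  suffices hy1 : y = 1 by
    simpa [hy1] using cs.length_mul_eq_of_forall_length_le hm hx
  by_contra hy1
  obtain ⟨k, hk, hdesc⟩ :=
    cs.exists_isLeftDescent_of_mem_parab (inv_mem hy) (inv_ne_one.mpr hy1)
  apply hv k hk
  have h1 := cs.length_mul_eq_of_forall_length_le hm (inv_mem hy)
  have h2 := cs.length_mul_eq_of_forall_length_le hm
    (mul_mem (cs.simple_mem_parab hk) (inv_mem hy))
  rw [inv_mul_cancel_left] at h1
  rw [mul_assoc, inv_mul_cancel_left] at h2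
  rw [IsLeftDescent] at hdesc ⊢
  omega

theorem length_mul_eq_of_not_isRightDescent {K : Set B} {v : W}
    (hv : ∀ k ∈ K, ¬ cs.IsRightDescent v k) {x : W} (hx : x ∈ parab cs K) :
    ℓ (v * x) = ℓ v + ℓ x := by
  have := cs.length_mul_eq_of_not_isLeftDescent
    (fun k hk => cs.isLeftDescent_inv_iff.not.mpr (hv k hk)) (inv_mem hx)
  rwa [← mul_inv_rev, length_inv, length_inv, length_inv, add_comm] at this

theorem parab_union (K K' : Set B) : parab cs (K ∪ K') = parab cs K ⊔ parab cs K' := by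
  rw [parab, parab, parab, Set.image_union, Subgroup.closure_union]

theorem not_isLeftDescent_of_conj_smul_parab {K J : Set B} {v : W}
    (hKJ : MulAut.conj v • parab cs K = parab cs J) (hv : ∀ k ∈ K, ¬ cs.IsRightDescent v k) :
    ∀ j ∈ J, ¬ cs.IsLeftDescent v j := by
  intro j hj hdesc
  have hmem : v⁻¹ * s j * v ∈ parab cs K := by
    have := cs.simple_mem_parab hj
    rwa [← hKJ, Subgroup.mem_pointwise_smul_iff_inv_smul_mem, ← map_inv, MulAut.smul_def,
      MulAut.conj_apply, inv_inv] at this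
  have := cs.length_mul_eq_of_not_isRightDescent hv hmem
  rw [show v * (v⁻¹ * s j * v) = s j * v by group] at this
  rw [IsLeftDescent] at hdesc
  omega

theorem isRightDescent_of_leL {u v : W} (huv : leL cs u v) {i : B} (hi : cs.IsRightDescent u i) :
    cs.IsRightDescent v i := by
  have := cs.length_mul_le (v * u⁻¹) (u * s i)
  rw [show v * u⁻¹ * (u * s i) = v * s i by group] at this
  rw [leL] at huv
  rw [IsRightDescent] at hi ⊢
  omega

theorem leR_antisymm {v w : W} (hvw : leR cs v w) (hwv : leR cs w v) : v = w := by
  rw [leR] at hvw hwv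
  exact inv_mul_eq_one.mp (cs.length_eq_zero_iff.mp (by omega))

theorem cuts_iff {v w : W} : cuts cs v w ↔ ∃ K J : Set B,
    MulAut.conj w • parab cs K = parab cs J ∧
      ∃ u ∈ parab cs K, w = v * u ∧ ∀ k ∈ K, ¬ cs.IsRightDescent v k := by
  simp only [cuts, image_mul_left_eq_image_mul_right_iff]

theorem cuts_refl (w : W) : cuts cs w w := by
  have hbot : parab cs ∅ = ⊥ := by rw [parab, Set.image_empty, Subgroup.closure_empty]
  exact cs.cuts_iff.mpr ⟨∅, ∅, by rw [hbot, Subgroup.smul_bot], 1, one_mem _, (mul_one w).symm,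
    fun _ hk => hk.elim⟩

theorem leR_of_cuts {v w : W} (h : cuts cs v w) : leR cs v w := by
  obtain ⟨K, -, -, u, hu, rfl, hv⟩ := cs.cuts_iff.mp h
  rw [leR, inv_mul_cancel_left, cs.length_mul_eq_of_not_isRightDescent hv hu]

theorem leL_of_cuts {v w : W} (h : cuts cs v w) : leL cs v w := by
  obtain ⟨K, J, hKJ, u, hu, rfl, hv⟩ := cs.cuts_iff.mp h
  rw [Subgroup.conj_mul_smul_eq_of_mem v hu] at hKJ
  have hmem : v * u * v⁻¹ ∈ parab cs J := by
    rw [← hKJ]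
    exact Subgroup.smul_mem_pointwise_smul _ _ _ hu
  have := cs.length_mul_eq_of_not_isLeftDescent
    (cs.not_isLeftDescent_of_conj_smul_parab hKJ hv) hmem
  rwa [inv_mul_cancel_right, eq_comm] at this

theorem cuts_trans {u v w : W} (huv : cuts cs u v) (hvw : cuts cs v w) : cuts cs u w := by
  have hleL := cs.leL_of_cuts huv
  obtain ⟨K₁, J₁, hv₁, a, ha, rfl, hu⟩ := cs.cuts_iff.mp huv
  obtain ⟨K₂, J₂, hw₂, b, hb, rfl, hv⟩ := cs.cuts_iff.mp hvw
  have ha' : a ∈ parab cs (K₁ ∪ K₂) := by rw [parab_union]; exact Subgroup.mem_sup_left ha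
  have hb' : b ∈ parab cs (K₁ ∪ K₂) := by rw [parab_union]; exact Subgroup.mem_sup_right hb
  refine cs.cuts_iff.mpr ⟨K₁ ∪ K₂, J₁ ∪ J₂, ?_, a * b, mul_mem ha' hb', mul_assoc .., ?_⟩
  · calc MulAut.conj (u * a * b) • parab cs (K₁ ∪ K₂)
        = MulAut.conj (u * a) • parab cs K₁ ⊔ MulAut.conj (u * a) • parab cs K₂ := by
          rw [Subgroup.conj_mul_smul_eq_of_mem _ hb', parab_union, Subgroup.smul_sup]
      _ = parab cs (J₁ ∪ J₂) := by
          rw [← Subgroup.conj_mul_smul_eq_of_mem _ hb, hv₁, hw₂, parab_union]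
  · rintro k (hk | hk)
    · exact hu k hk
    · exact fun hd => hv k hk (cs.isRightDescent_of_leL hleL hd)

end CoxeterSystem

theorem cuts_partialOrder_general {B W : Type*} [Group W] {M : CoxeterMatrix B}
    (cs : CoxeterSystem M W) :
    (∀ w : W, cuts cs w w) ∧
    (∀ v w : W, cuts cs v w → cuts cs w v → v = w) ∧
    (∀ u v w : W, cuts cs u v → cuts cs v w → cuts cs u w) ∧
    (∀ v w : W, cuts cs v w → leL cs v w ∧ leR cs v w) :=
  ⟨cs.cuts_refl, fun _ _ hvw hwv => cs.leR_antisymm (cs.leR_of_cuts hvw) (cs.leR_of_cuts hwv),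
    fun _ _ _ => cs.cuts_trans, fun _ _ h => ⟨cs.leL_of_cuts h, cs.leR_of_cuts h⟩⟩

/-- The cutting relation `⊑` is a partial order on `W` refining both weak orders. -/
theorem cuts_partialOrder {B W : Type*} [Group W] [Finite W] {M : CoxeterMatrix B}
    (cs : CoxeterSystem M W) :
    (∀ w : W, cuts cs w w) ∧
    (∀ v w : W, cuts cs v w → cuts cs w v → v = w) ∧
    (∀ u v w : W, cuts cs u v → cuts cs v w → cuts cs u w) ∧
    (∀ v w : W, cuts cs v w → leL cs v w ∧ leR cs v w) :=
  cuts_partialOrder_general cs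
end
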